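/- For any odd integer q and any partition λ, the q-sign satisfies δ_q(λ) = δ_q(λ*), where λ* is the conjugate partition. Here δ_q(λ) = (−1)^{L(c_1)+⋯+L(c_k)} for any sequence of q-hooks c_1,…,c_k removed from λ to reach its q-core, and this is well-defined (independent of the sequence). -/

import Mathlib

open scoped BigOperators

/-- `lam : ℕ → ℕ` represents a partition: weakly decreasing and eventually zero
(`lam i` is the `i`-th part, indexed from `0`). -/
def IsPartitionFun (lam : ℕ → ℕ) : Prop :=
  (∀ i j, i ≤ j → lam j ≤ lam i) ∧ ∃ N, ∀ i, N ≤ i → lam i = 0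

/-- The conjugate (transpose) partition. -/
noncomputable def conjFun (lam : ℕ → ℕ) : ℕ → ℕ := fun j => {i | j < lam i}.ncard

/-- The hook length of the `(i,j)`-node of `lam` (nodes `(i,j)` with `j < lam i`,
both coordinates indexed from `0`). -/
noncomputable def hookLength (lam : ℕ → ℕ) (i j : ℕ) : ℕ :=
  (lam i - j) + (conjFun lam j - i) - 1

/-- The leg length of the `(i,j)`-hook of `lam`. -/
noncomputable def legLength (lam : ℕ → ℕ) (i j : ℕ) : ℕ := conjFun lam j - i - 1

/-- The partition obtained from `lam` by removing the hook of the `(i,j)`-node. -/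
noncomputable def removeHook (lam : ℕ → ℕ) (i j : ℕ) : ℕ → ℕ := fun k =>
  if k < i then lam k
  else if k + 1 < conjFun lam j then lam (k + 1) - 1
  else if k + 1 = conjFun lam j then j
  else lam k

/-- `M_q(lam)`: the set of partitions obtained from `lam` by removing a single `q`-hook. -/
noncomputable def MhookSet (q : ℕ) (lam : ℕ → ℕ) : Set (ℕ → ℕ) :=
  {mu | ∃ i j, j < lam i ∧ hookLength lam i j = q ∧ mu = removeHook lam i j}

/-- The number of diagonal nodes (the Durfee square size) of `lam`. -/
noncomputable def durfee (lam : ℕ → ℕ) : ℕ := {i | i < lam i}.ncard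

/-- The (finite set of distinct) diagonal hook lengths of `lam`. -/
noncomputable def diagHooks (lam : ℕ → ℕ) : Finset ℕ :=
  (Finset.range (durfee lam)).image (fun i => hookLength lam i i)

/-- `IsHookRemovalSeq q lam ls mu`: `mu` is obtained from `lam` by successively removing
`q`-hooks whose leg lengths are recorded in the list `ls`. -/
def IsHookRemovalSeq (q : ℕ) : (ℕ → ℕ) → List ℕ → (ℕ → ℕ) → Prop
  | lam, [], mu => mu = lam
  | lam, l :: ls, mu => ∃ i j, j < lam i ∧ hookLength lam i j = q ∧ legLength lam i j = l ∧
      IsHookRemovalSeq q (removeHook lam i j) ls mu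

/-- `mu` is a `q`-core: it has no hook of length `q`. -/
noncomputable def IsQCore (q : ℕ) (mu : ℕ → ℕ) : Prop :=
  ∀ i j, j < mu i → hookLength mu i j ≠ q

/-!
Encode a partition `λ` with at most `n` parts by its β-set `{λ k + (n - 1 - k) | k < n}`,
drawn on the `q`-abacus. Removing a `q`-hook of leg length `L` slides one bead from `x` to `x - q`
past exactly `L` other beads. Send every bead to the place it takes once all beads are pushed up
their runners: this map keeps its values when a bead slides, so the parity of its number of
inversions changes by `L`; and it is the identity for a `q`-core, whose β-set is closed under
`x ↦ x - q`. Hence `(-1) ^ (L₁ + ⋯ + Lₖ)` is `-1` to the number of inversions of the β-set of `λ`,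
whatever the removal sequence. Transposing a removal sequence of `λ` gives one of `λ*`, and a hook
and its transpose have leg lengths adding up to `q - 1`, which is even for odd `q`.
-/

open Finset

theorem neg_one_pow_eq_of_even_add {a b : ℕ} (h : Even (a + b)) : (-1 : ℤ) ^ a = (-1) ^ b := by
  rw [neg_one_pow_eq_pow_mod_two, neg_one_pow_eq_pow_mod_two (n := b)]
  obtain ⟨c, hc⟩ := h
  congr 1
  omega

section Inversions

variable {α β : Type*} [LinearOrder α] [LinearOrder β] {f g : α → β} {s : Finset α}

def invCount (f : α → β) (s : Finset α) : ℕ :=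
  ∑ b ∈ s, #{a ∈ s | a < b ∧ f b < f a}

theorem invCount_congr (h : Set.EqOn f g s) : invCount f s = invCount g s :=
  sum_congr rfl fun _ hb => congrArg card (filter_congr fun _ ha => by rw [h ha, h hb])

theorem invCount_eq_zero_of_monotoneOn (h : MonotoneOn f s) : invCount f s = 0 :=
  sum_eq_zero fun _ hb => card_eq_zero.2 <| filter_eq_empty_iff.2 fun _ ha hlt =>
    (h ha hb hlt.1.le).not_gt hlt.2

theorem invCount_insert {x : α} (hx : x ∉ s) :
    invCount f (insert x s) =
      invCount f s + #{y ∈ s | y < x ∧ f x < f y} + #{y ∈ s | x < y ∧ f y < f x} := by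
  have hrow : ∀ b ∈ s, #{a ∈ insert x s | a < b ∧ f b < f a} =
      #{a ∈ s | a < b ∧ f b < f a} + if x < b ∧ f b < f x then 1 else 0 := by
    intro b _
    rw [filter_insert]
    split_ifs with h
    · exact card_insert_of_notMem fun hmem => hx (mem_filter.1 hmem).1
    · rfl
  rw [invCount, sum_insert hx, filter_insert, if_neg (fun h => lt_irrefl x h.1),
    sum_congr rfl hrow, sum_add_distrib, ← card_filter, invCount]
  ring

theorem card_filter_eq_add_of_iff {p r t : α → Prop} [DecidablePred p] [DecidablePred r]
    [DecidablePred t] (h : ∀ y ∈ s, p y ↔ r y ∨ t y) (hrt : ∀ y ∈ s, r y → ¬t y) :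
    #{y ∈ s | p y} = #{y ∈ s | r y} + #{y ∈ s | t y} := by
  rw [← card_union_of_disjoint (disjoint_filter.2 hrt), ← filter_or]
  exact congrArg card (filter_congr h)

/-- Exactly the points strictly between `x'` and `x` change their order relative to the moved
point. -/
theorem neg_one_pow_invCount_move {x x' : α} (hx : x ∉ s) (hx' : x' ∉ s) (hlt : x' < x)
    (hfg : Set.EqOn f g s) (hgx : g x' = f x) (hne : ∀ y ∈ s, x' < y → y < x → f y ≠ f x) :
    (-1 : ℤ) ^ invCount f (insert x s) =
      (-1) ^ (invCount g (insert x' s) + #{y ∈ s | x' < y ∧ y < x}) := by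
  have hg : invCount g (insert x' s) = invCount f s + #{y ∈ s | y < x' ∧ f x < f y} +
      #{y ∈ s | x' < y ∧ f y < f x} := by
    rw [invCount_insert hx', ← invCount_congr hfg, hgx]
    refine congrArg₂ (· + ·) (congrArg₂ (· + ·) rfl ?_) ?_ <;>
      exact congrArg card (filter_congr fun y hy => by rw [hfg hy])
  have hleft : #{y ∈ s | y < x ∧ f x < f y} =
      #{y ∈ s | y < x' ∧ f x < f y} + #{y ∈ s | (x' < y ∧ y < x) ∧ f x < f y} :=
    card_filter_eq_add_of_iff
      (fun y hy => by have : y ≠ x' := ne_of_mem_of_not_mem hy hx'; grind)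
      (fun y _ h h' => (h.1.trans h'.1.1).false)
  have hright : #{y ∈ s | x' < y ∧ f y < f x} =
      #{y ∈ s | x < y ∧ f y < f x} + #{y ∈ s | (x' < y ∧ y < x) ∧ f y < f x} :=
    card_filter_eq_add_of_iff
      (fun y hy => by have : y ≠ x := ne_of_mem_of_not_mem hy hx; grind)
      (fun y _ h h' => (h.1.trans h'.1.2).false)
  have hmid : #{y ∈ s | x' < y ∧ y < x} =
      #{y ∈ s | (x' < y ∧ y < x) ∧ f x < f y} + #{y ∈ s | (x' < y ∧ y < x) ∧ f y < f x} :=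
    card_filter_eq_add_of_iff
      (fun y hy => by have := hne y hy; grind)
      (fun y _ h h' => (h.2.trans h'.2).false)
  apply neg_one_pow_eq_of_even_add
  rw [invCount_insert hx, hg, hmid, hleft, hright, Nat.even_iff]
  omega

end Inversions

section Abacus

variable {q x y : ℕ} {s B : Finset ℕ}

/-- The position of the bead `y` on the `q`-abacus of `B` after every bead has been slid as far
up its runner as possible. -/
def runnerPos (q : ℕ) (B : Finset ℕ) (y : ℕ) : ℕ :=
  y % q + q * #{z ∈ B | z < y ∧ z % q = y % q}

def abacusInv (q : ℕ) (B : Finset ℕ) : ℕ :=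
  invCount (runnerPos q B) B

theorem runnerPos_mod : runnerPos q B y % q = y % q := by
  rw [runnerPos, Nat.add_mul_mod_self_left, Nat.mod_mod]

theorem runnerPos_insert_sub (hxq : q ≤ x) (hx : x ∉ s) (hx' : x - q ∉ s) (hy : y ∈ s) :
    runnerPos q (insert (x - q) s) y = runnerPos q (insert x s) y := by
  have hiff : (x - q < y ∧ (x - q) % q = y % q) ↔ (x < y ∧ x % q = y % q) := by
    rw [(Nat.mod_eq_sub_mod hxq).symm]
    refine ⟨fun ⟨hlt, hmod⟩ => ⟨?_, hmod⟩, fun ⟨hlt, hmod⟩ => ⟨by omega, hmod⟩⟩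
    by_contra hle
    have := Nat.ModEq.add_le_of_lt hmod.symm
      (lt_of_le_of_ne (not_lt.1 hle) (ne_of_mem_of_not_mem hy hx))
    have := ne_of_mem_of_not_mem hy hx'
    omega
  simp only [runnerPos, filter_insert, hiff]
  split_ifs
  · rw [card_insert_of_notMem (fun h => hx' (mem_filter.1 h).1),
      card_insert_of_notMem (fun h => hx (mem_filter.1 h).1)]
  · rfl

theorem runnerPos_insert_sub_self (hxq : q ≤ x) (hx' : x - q ∉ s) :
    runnerPos q (insert (x - q) s) (x - q) = runnerPos q (insert x s) x := by
  have hmod := (Nat.mod_eq_sub_mod hxq).symm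
  simp only [runnerPos, filter_insert, lt_irrefl, false_and, if_false, hmod]
  congr 3
  refine filter_congr fun z hz => ⟨fun h => ⟨by omega, h.2⟩, fun h => ⟨?_, h.2⟩⟩
  have := Nat.ModEq.add_le_of_lt h.2 h.1
  have := ne_of_mem_of_not_mem hz hx'
  omega

theorem runnerPos_eq_self (hq : 0 < q) (hB : ∀ x ∈ B, q ≤ x → x - q ∈ B) (hy : y ∈ B) :
    runnerPos q B y = y := by
  suffices hcount : #{z ∈ B | z < y ∧ z % q = y % q} = y / q by
    rw [runnerPos, hcount, Nat.mod_add_div]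
  induction y using Nat.strong_induction_on with
  | _ y ih =>
    rcases lt_or_ge y q with hyq | hyq
    · rw [Nat.div_eq_of_lt hyq, card_eq_zero, filter_eq_empty_iff]
      exact fun z _ h => by have := Nat.ModEq.add_le_of_lt h.2 h.1; omega
    have hmem := hB y hy hyq
    have hmod := (Nat.mod_eq_sub_mod hyq).symm
    have hfilter : {z ∈ B | z < y ∧ z % q = y % q} =
        insert (y - q) {z ∈ B | z < y - q ∧ z % q = (y - q) % q} := by
      ext z
      simp only [mem_filter, mem_insert, hmod]
      constructor
      · rintro ⟨hz, hzy, hzmod⟩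
        have := Nat.ModEq.add_le_of_lt hzmod hzy
        rcases eq_or_lt_of_le (show z ≤ y - q by omega) with rfl | hlt
        exacts [Or.inl rfl, Or.inr ⟨hz, hlt, hzmod⟩]
      · rintro (rfl | ⟨hz, hlt, hzmod⟩)
        exacts [⟨hmem, by omega, hmod⟩, ⟨hz, by omega, hzmod⟩]
    rw [hfilter, card_insert_of_notMem (by simp), ih _ (by omega) hmem, Nat.div_eq_sub_div hq hyq]

theorem abacusInv_eq_zero (hq : 0 < q) (hB : ∀ x ∈ B, q ≤ x → x - q ∈ B) : abacusInv q B = 0 := by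
  rw [abacusInv,
    invCount_congr (f := runnerPos q B) (g := id) fun _ hy => runnerPos_eq_self hq hB hy]
  exact invCount_eq_zero_of_monotoneOn monotoneOn_id

theorem neg_one_pow_abacusInv_insert_sub (hq : 0 < q) (hxq : q ≤ x) (hx : x ∉ s)
    (hx' : x - q ∉ s) :
    (-1 : ℤ) ^ abacusInv q (insert x s) =
      (-1) ^ (abacusInv q (insert (x - q) s) + #{y ∈ s | x - q < y ∧ y < x}) := by
  refine neg_one_pow_invCount_move hx hx' (by omega)
    (fun y hy => (runnerPos_insert_sub hxq hx hx' hy).symm) (runnerPos_insert_sub_self hxq hx')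
    fun y _ hlt hgt heq => ?_
  have hmod : y % q = x % q := by rw [← runnerPos_mod (B := insert x s), heq, runnerPos_mod]
  have := Nat.ModEq.add_le_of_lt hmod hgt
  omega

end Abacus

theorem IsPartitionFun.antitone {lam : ℕ → ℕ} (hlam : IsPartitionFun lam) : Antitone lam :=
  fun _ _ h => hlam.1 _ _ h

theorem lt_conjFun_iff {lam : ℕ → ℕ} (hlam : IsPartitionFun lam) {i k : ℕ} :
    i < conjFun lam k ↔ k < lam i := by
  classical
  have hex : ∃ m, lam m ≤ k := by
    obtain ⟨N, hN⟩ := hlam.2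
    exact ⟨N, by simp [hN N le_rfl]⟩
  have hrows : {r | k < lam r} = Set.Iio (Nat.find hex) := by
    ext r
    simp only [Set.mem_ofPred_eq, Set.mem_Iio, Nat.lt_find_iff, not_le]
    exact ⟨fun h m hm => h.trans_le (hlam.antitone hm), fun h => h r le_rfl⟩
  rw [conjFun, hrows, ← coe_range, Set.ncard_coe_finset, card_range, Nat.lt_find_iff]
  simp only [not_le]
  exact ⟨fun h => h i le_rfl, fun h m hm => h.trans_le (hlam.antitone hm)⟩

theorem conjFun_le_iff {lam : ℕ → ℕ} (hlam : IsPartitionFun lam) {i k : ℕ} :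
    conjFun lam k ≤ i ↔ lam i ≤ k := by
  simpa only [not_lt] using (lt_conjFun_iff hlam).not

theorem IsPartitionFun.conjFun {lam : ℕ → ℕ} (hlam : IsPartitionFun lam) :
    IsPartitionFun (conjFun lam) := by
  refine ⟨fun k k' hk => le_of_forall_lt fun r hr => ?_, lam 0, fun k hk => ?_⟩
  · exact (lt_conjFun_iff hlam).2 (hk.trans_lt ((lt_conjFun_iff hlam).1 hr))
  · exact Nat.le_zero.1 ((conjFun_le_iff hlam).2 hk)

theorem conjFun_eq_of_forall_lt_iff {lam nu : ℕ → ℕ} (hlam : IsPartitionFun lam)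
    (h : ∀ r k, r < nu k ↔ k < lam r) : conjFun lam = nu :=
  funext fun k => eq_of_forall_lt_iff fun r => (lt_conjFun_iff hlam).trans (h r k).symm

theorem conjFun_conjFun {lam : ℕ → ℕ} (hlam : IsPartitionFun lam) :
    conjFun (conjFun lam) = lam :=
  conjFun_eq_of_forall_lt_iff hlam.conjFun fun _ _ => (lt_conjFun_iff hlam).symm

section RemoveHook

variable {lam : ℕ → ℕ} {i j r : ℕ}

theorem removeHook_of_lt (hr : r < i) : removeHook lam i j r = lam r := by
  simp [removeHook, hr]

theorem removeHook_of_succ_lt (hr : i ≤ r) (hrc : r + 1 < conjFun lam j) :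
    removeHook lam i j r = lam (r + 1) - 1 := by
  simp [removeHook, hrc, hr.not_gt]

theorem removeHook_of_succ_eq (hr : i ≤ r) (hrc : r + 1 = conjFun lam j) :
    removeHook lam i j r = j := by
  simp [removeHook, hrc, hr.not_gt]

theorem removeHook_of_conjFun_le (hi : i < conjFun lam j) (hr : conjFun lam j ≤ r) :
    removeHook lam i j r = lam r := by
  simp [removeHook, (hi.trans_le hr).not_gt, show ¬r + 1 < conjFun lam j by omega,
    show r + 1 ≠ conjFun lam j by omega]

/-- The rim hook of `(i, j)` consists of the nodes `(r, k)` weakly south-east of `(i, j)` for which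
`(r + 1, k + 1)` is not a node; unlike `removeHook` itself, this description is symmetric under
conjugation. -/
theorem lt_removeHook_iff (hlam : IsPartitionFun lam) (hij : j < lam i) {k : ℕ} :
    k < removeHook lam i j r ↔ k < lam r ∧ ¬(i ≤ r ∧ j ≤ k ∧ lam (r + 1) ≤ k + 1) := by
  have hic : i < conjFun lam j := (lt_conjFun_iff hlam).2 hij
  have hmono := hlam.antitone
  rcases lt_or_ge r i with hri | hir
  · simp [removeHook_of_lt hri, hri.not_ge]
  rcases lt_trichotomy (r + 1) (conjFun lam j) with hrc | hrc | hrc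
  · have hj := (lt_conjFun_iff hlam).1 hrc
    have := hmono (Nat.le_add_right r 1)
    rw [removeHook_of_succ_lt hir hrc]
    omega
  · have hj := (lt_conjFun_iff hlam).1 (show r < conjFun lam j by omega)
    have := (conjFun_le_iff hlam).1 hrc.ge
    rw [removeHook_of_succ_eq hir hrc]
    omega
  · have := (conjFun_le_iff hlam).1 (show conjFun lam j ≤ r by omega)
    rw [removeHook_of_conjFun_le hic (by omega)]
    omega

theorem removeHook_le (hlam : IsPartitionFun lam) (hij : j < lam i) (r : ℕ) :
    removeHook lam i j r ≤ lam r :=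
  le_of_forall_lt fun _ hk => ((lt_removeHook_iff hlam hij).1 hk).1

theorem IsPartitionFun.removeHook (hlam : IsPartitionFun lam) (hij : j < lam i) :
    IsPartitionFun (removeHook lam i j) := by
  refine ⟨fun r r' hr => le_of_forall_lt fun k hk => ?_, ?_⟩
  · rw [lt_removeHook_iff hlam hij] at hk ⊢
    refine ⟨hk.1.trans_le (hlam.antitone hr), fun ⟨hir, hjk, hk'⟩ => hk.2 ⟨hir.trans hr, hjk, ?_⟩⟩
    rcases hr.eq_or_lt with rfl | hr
    · exact hk'
    · have := hlam.antitone (show r + 1 ≤ r' from hr)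
      have := hlam.antitone (Nat.le_add_right r' 1)
      omega
  · obtain ⟨N, hN⟩ := hlam.2
    exact ⟨N, fun r hr => Nat.le_zero.1 (hN r hr ▸ removeHook_le hlam hij r)⟩

theorem conjFun_removeHook (hlam : IsPartitionFun lam) (hij : j < lam i) :
    conjFun (removeHook lam i j) = removeHook (conjFun lam) j i := by
  refine conjFun_eq_of_forall_lt_iff (hlam.removeHook hij) fun r k => ?_
  rw [lt_removeHook_iff hlam.conjFun ((lt_conjFun_iff hlam).2 hij), lt_removeHook_iff hlam hij,
    lt_conjFun_iff hlam, conjFun_le_iff hlam]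
  tauto

end RemoveHook

section Conjugation

variable {lam : ℕ → ℕ} {i j : ℕ}

theorem hookLength_conjFun (hlam : IsPartitionFun lam) :
    hookLength (conjFun lam) j i = hookLength lam i j := by
  simp only [hookLength, conjFun_conjFun hlam]
  omega

theorem legLength_add_legLength_conjFun (hlam : IsPartitionFun lam) (hij : j < lam i) :
    legLength lam i j + legLength (conjFun lam) j i + 1 = hookLength lam i j := by
  have := (lt_conjFun_iff hlam).2 hij
  simp only [legLength, hookLength, conjFun_conjFun hlam]
  omega

theorem IsQCore.conjFun {q : ℕ} (hlam : IsPartitionFun lam) (hcore : IsQCore q lam) :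
    IsQCore q (conjFun lam) := fun a b hab => by
  rw [hookLength_conjFun hlam]
  exact hcore b a ((lt_conjFun_iff hlam).1 hab)

end Conjugation

section RemovalSeq

variable {q : ℕ} {ls : List ℕ} {lam mu : ℕ → ℕ}

theorem IsHookRemovalSeq.isPartitionFun (h : IsHookRemovalSeq q lam ls mu)
    (hlam : IsPartitionFun lam) : IsPartitionFun mu ∧ ∀ k, mu k ≤ lam k := by
  induction ls generalizing lam with
  | nil => subst h; exact ⟨hlam, fun _ => le_rfl⟩
  | cons l ls ih =>
    obtain ⟨i, j, hij, -, -, hrest⟩ := h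
    obtain ⟨hmu, hle⟩ := ih hrest (hlam.removeHook hij)
    exact ⟨hmu, fun k => (hle k).trans (removeHook_le hlam hij k)⟩

theorem IsHookRemovalSeq.exists_conjFun (hq : Odd q) (h : IsHookRemovalSeq q lam ls mu)
    (hlam : IsPartitionFun lam) :
    ∃ ls', IsHookRemovalSeq q (conjFun lam) ls' (conjFun mu) ∧
      (-1 : ℤ) ^ ls'.sum = (-1) ^ ls.sum := by
  induction ls generalizing lam with
  | nil => exact ⟨[], congrArg _ h, rfl⟩
  | cons l ls ih =>
    obtain ⟨i, j, hij, hhook, rfl, hrest⟩ := h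
    obtain ⟨ls', hseq, hsum⟩ := ih hrest (hlam.removeHook hij)
    refine ⟨legLength (conjFun lam) j i :: ls',
      ⟨j, i, (lt_conjFun_iff hlam).2 hij, (hookLength_conjFun hlam).trans hhook, rfl,
        conjFun_removeHook hlam hij ▸ hseq⟩, ?_⟩
    have hleg := legLength_add_legLength_conjFun hlam hij
    rw [List.sum_cons, List.sum_cons, pow_add, pow_add, hsum]
    congr 1
    apply neg_one_pow_eq_of_even_add
    obtain ⟨c, hc⟩ := hq
    exact ⟨c, by omega⟩

end RemovalSeq

section BetaSet

variable {lam : ℕ → ℕ} {n i j k r y : ℕ}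

def betaNum (lam : ℕ → ℕ) (n k : ℕ) : ℕ := lam k + (n - 1 - k)

def betaSet (lam : ℕ → ℕ) (n : ℕ) : Finset ℕ := (range n).image (betaNum lam n)

/-- The gap of the `β`-set belonging to column `j`: removing the hook of a node `(i, j)` moves the
bead `betaNum lam n i` to it. -/
noncomputable def betaGap (lam : ℕ → ℕ) (n j : ℕ) : ℕ := j + (n - conjFun lam j)

theorem mem_betaSet : y ∈ betaSet lam n ↔ ∃ k < n, betaNum lam n k = y := by
  simp [betaSet]

theorem betaNum_strictAntiOn (hlam : IsPartitionFun lam) :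
    StrictAntiOn (betaNum lam n) (Set.Iio n) := fun k _ k' hk' hkk' => by
  have := hlam.antitone hkk'.le
  simp only [betaNum, Set.mem_Iio] at hk' ⊢
  omega

theorem betaGap_lt_betaNum_iff (hlam : IsPartitionFun lam) (hk : k < n) :
    betaGap lam n j < betaNum lam n k ↔ k < conjFun lam j := by
  rw [betaGap, betaNum]
  constructor
  · intro h
    by_contra hck
    have := (conjFun_le_iff hlam).1 (not_lt.1 hck)
    omega
  · intro hkc
    have := (lt_conjFun_iff hlam).1 hkc
    omega

theorem betaNum_ne_betaGap (hlam : IsPartitionFun lam) (hk : k < n) :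
    betaNum lam n k ≠ betaGap lam n j := by
  have := betaGap_lt_betaNum_iff (j := j) hlam hk
  rcases lt_or_ge k (conjFun lam j) with hkc | hkc
  · exact (this.2 hkc).ne'
  · have := (conjFun_le_iff hlam).1 hkc
    simp only [betaNum, betaGap]
    omega

theorem betaGap_notMem_betaSet (hlam : IsPartitionFun lam) : betaGap lam n j ∉ betaSet lam n := by
  rw [mem_betaSet]
  rintro ⟨k, hk, heq⟩
  exact betaNum_ne_betaGap hlam hk heq

theorem betaGap_strictMono (hlam : IsPartitionFun lam) : StrictMono (betaGap lam n) :=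
  fun j j' hjj' => by
    have := hlam.conjFun.antitone hjj'.le
    simp only [betaGap]
    omega

theorem conjFun_le_of_apply_eq_zero (hlam : IsPartitionFun lam) (hn : lam n = 0) :
    conjFun lam j ≤ n :=
  (conjFun_le_iff hlam).2 (hn ▸ Nat.zero_le j)

section Hook

variable (hlam : IsPartitionFun lam) (hn : lam n = 0) (hij : j < lam i)
include hlam hn hij

theorem lt_of_apply_eq_zero : i < n := by
  by_contra h
  have := hlam.antitone (not_lt.1 h)
  omega

theorem betaGap_add_hookLength : betaGap lam n j + hookLength lam i j = betaNum lam n i := by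
  have := (lt_conjFun_iff hlam).2 hij
  have := conjFun_le_of_apply_eq_zero (j := j) hlam hn
  simp only [betaGap, hookLength, betaNum]
  omega

theorem legLength_eq_card :
    legLength lam i j = #{y ∈ betaSet lam n | betaGap lam n j < y ∧ y < betaNum lam n i} := by
  have hin := lt_of_apply_eq_zero hlam hn hij
  have hcn := conjFun_le_of_apply_eq_zero (j := j) hlam hn
  have hanti := betaNum_strictAntiOn (n := n) hlam
  have hrows : {k ∈ range n | betaGap lam n j < betaNum lam n k ∧ betaNum lam n k <
      betaNum lam n i} = Ioo i (conjFun lam j) := by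
    ext k
    simp only [mem_filter, mem_range, mem_Ioo]
    constructor
    · rintro ⟨hk, hgap, hlt⟩
      exact ⟨(hanti.lt_iff_gt hk hin).1 hlt, (betaGap_lt_betaNum_iff hlam hk).1 hgap⟩
    · rintro ⟨hik, hkc⟩
      have hk : k < n := hkc.trans_le hcn
      exact ⟨hk, (betaGap_lt_betaNum_iff hlam hk).2 hkc, (hanti.lt_iff_gt hk hin).2 hik⟩
  rw [betaSet, filter_image, hrows, card_image_of_injOn, Nat.card_Ioo, legLength]
  exact hanti.injOn.mono fun k hk => (mem_Ioo.1 hk).2.trans_le hcn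

theorem betaSet_removeHook : betaSet (removeHook lam i j) n =
    insert (betaGap lam n j) ((betaSet lam n).erase (betaNum lam n i)) := by
  have hin := lt_of_apply_eq_zero hlam hn hij
  have hic : i < conjFun lam j := (lt_conjFun_iff hlam).2 hij
  have hcn := conjFun_le_of_apply_eq_zero (j := j) hlam hn
  have hinj := (betaNum_strictAntiOn (n := n) hlam).injOn
  have hbelow : ∀ k < conjFun lam j, j < lam k := fun k hk => (lt_conjFun_iff hlam).1 hk
  ext y
  simp only [mem_insert, mem_erase, mem_betaSet]
  constructor
  · rintro ⟨r, hr, rfl⟩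
    rcases lt_or_ge r i with hri | hir
    · refine Or.inr ⟨fun h => ?_, r, hr, by simp [betaNum, removeHook_of_lt hri]⟩
      have := hinj hr hin (by simpa [betaNum, removeHook_of_lt hri] using h)
      omega
    rcases lt_trichotomy (r + 1) (conjFun lam j) with hrc | hrc | hrc
    · have := hbelow _ hrc
      have hval : betaNum (removeHook lam i j) n r = betaNum lam n (r + 1) := by
        simp only [betaNum, removeHook_of_succ_lt hir hrc]
        omega
      refine Or.inr ⟨fun h => ?_, r + 1, by omega, hval.symm⟩
      have := hinj (show r + 1 < n by omega) hin (hval ▸ h)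
      omega
    · left
      simp only [betaNum, betaGap, removeHook_of_succ_eq hir hrc]
      omega
    · have hval : betaNum (removeHook lam i j) n r = betaNum lam n r := by
        simp only [betaNum, removeHook_of_conjFun_le hic (show conjFun lam j ≤ r by omega)]
      refine Or.inr ⟨fun h => ?_, r, hr, hval.symm⟩
      have := hinj hr hin (hval ▸ h)
      omega
  · rintro (rfl | ⟨hne, k, hk, rfl⟩)
    · refine ⟨conjFun lam j - 1, by omega, ?_⟩
      simp only [betaNum, betaGap, removeHook_of_succ_eq (show i ≤ conjFun lam j - 1 by omega)
        (show conjFun lam j - 1 + 1 = conjFun lam j by omega)]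
      omega
    have hki : k ≠ i := fun h => hne (h ▸ rfl)
    rcases lt_or_ge k i with hki' | hik
    · exact ⟨k, hk, by simp [betaNum, removeHook_of_lt hki']⟩
    rcases lt_or_ge k (conjFun lam j) with hkc | hkc
    · have := hbelow k hkc
      refine ⟨k - 1, by omega, ?_⟩
      simp only [betaNum, removeHook_of_succ_lt (show i ≤ k - 1 by omega)
        (show k - 1 + 1 < conjFun lam j by omega), show k - 1 + 1 = k by omega]
      omega
    · exact ⟨k, hk, by simp [betaNum, removeHook_of_conjFun_le hic hkc]⟩

end Hook

end BetaSet

section Core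

variable {lam : ℕ → ℕ} {n i y : ℕ}

theorem card_filter_betaSet_lt (hlam : IsPartitionFun lam) (hi : i < n) :
    #{z ∈ betaSet lam n | z < betaNum lam n i} = n - 1 - i := by
  have hanti := betaNum_strictAntiOn (n := n) hlam
  have hrows : {k ∈ range n | betaNum lam n k < betaNum lam n i} = Ioo i n := by
    ext k
    simp only [mem_filter, mem_range, mem_Ioo]
    exact ⟨fun ⟨hk, hlt⟩ => ⟨(hanti.lt_iff_gt hk hi).1 hlt, hk⟩,
      fun ⟨hik, hk⟩ => ⟨hk, (hanti.lt_iff_gt hk hi).2 hik⟩⟩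
  rw [betaSet, filter_image, hrows, card_image_of_injOn (hanti.injOn.mono fun k hk =>
    (mem_Ioo.1 hk).2), Nat.card_Ioo]
  omega

/-- Every gap below the bead of row `i` is the gap of a column `j < lam i`: there are `lam i` such
gaps, and the gaps of these columns are distinct and lie below the bead. -/
theorem exists_betaGap_eq (hlam : IsPartitionFun lam) (hi : i < n)
    (hy : y < betaNum lam n i) (hyB : y ∉ betaSet lam n) : ∃ j < lam i, betaGap lam n j = y := by
  have hsplit := card_filter_add_card_filter_not (s := range (betaNum lam n i))
    (· ∈ betaSet lam n)
  set gaps := {z ∈ range (betaNum lam n i) | z ∉ betaSet lam n}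
  have hcard : #gaps = lam i := by
    have hbeads : {z ∈ range (betaNum lam n i) | z ∈ betaSet lam n} =
        {z ∈ betaSet lam n | z < betaNum lam n i} := by
      ext z
      simp [and_comm]
    rw [hbeads, card_filter_betaSet_lt hlam hi, card_range] at hsplit
    have : betaNum lam n i = lam i + (n - 1 - i) := rfl
    omega
  have hsub : (range (lam i)).image (betaGap lam n) ⊆ gaps := by
    simp only [subset_iff, mem_image, mem_range]
    rintro _ ⟨j, hj, rfl⟩
    refine mem_filter.2 ⟨mem_range.2 ?_, betaGap_notMem_betaSet hlam⟩
    exact (betaGap_lt_betaNum_iff hlam hi).2 ((lt_conjFun_iff hlam).2 hj)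
  have heq := eq_of_subset_of_card_le hsub (by
    rw [hcard, card_image_of_injective _ (betaGap_strictMono hlam).injective, card_range])
  have hmem : y ∈ gaps := mem_filter.2 ⟨mem_range.2 hy, hyB⟩
  simpa [← heq] using hmem

theorem IsQCore.sub_mem_betaSet {q : ℕ} (hq : 0 < q) (hlam : IsPartitionFun lam)
    (hn : lam n = 0) (hcore : IsQCore q lam) {x : ℕ} (hx : x ∈ betaSet lam n) (hxq : q ≤ x) :
    x - q ∈ betaSet lam n := by
  by_contra hnot
  obtain ⟨i, hi, rfl⟩ := mem_betaSet.1 hx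
  obtain ⟨j, hj, hgap⟩ := exists_betaGap_eq hlam hi (by omega) hnot
  have := betaGap_add_hookLength hlam hn hj
  exact hcore i j hj (by omega)

end Core

section Sign

variable {q n : ℕ} {ls : List ℕ} {lam mu : ℕ → ℕ}

theorem IsHookRemovalSeq.neg_one_pow_sum_mul (hq : 0 < q) (h : IsHookRemovalSeq q lam ls mu)
    (hlam : IsPartitionFun lam) (hn : lam n = 0) :
    (-1 : ℤ) ^ ls.sum * (-1) ^ abacusInv q (betaSet mu n) =
      (-1) ^ abacusInv q (betaSet lam n) := by
  induction ls generalizing lam with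
  | nil => subst h; simp
  | cons l ls ih =>
    obtain ⟨i, j, hij, hhook, rfl, hrest⟩ := h
    have hn' : removeHook lam i j n = 0 := Nat.le_zero.1 (hn ▸ removeHook_le hlam hij n)
    set x := betaNum lam n i
    set s := (betaSet lam n).erase x
    have hx : x ∈ betaSet lam n := mem_betaSet.2 ⟨i, lt_of_apply_eq_zero hlam hn hij, rfl⟩
    have hsum := betaGap_add_hookLength hlam hn hij
    have hgap : betaGap lam n j = x - q := by omega
    have hleg : #{y ∈ s | x - q < y ∧ y < x} = legLength lam i j := by
      rw [legLength_eq_card hlam hn hij, filter_erase, hgap, erase_eq_of_notMem (by simp)]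
    have hmove := neg_one_pow_abacusInv_insert_sub hq (s := s) (x := x) (by omega)
      (notMem_erase x _) (hgap ▸ fun h => betaGap_notMem_betaSet hlam (mem_of_mem_erase h))
    rw [insert_erase hx, hleg, ← hgap, ← betaSet_removeHook hlam hn hij] at hmove
    rw [hmove, List.sum_cons, pow_add, mul_assoc, ih hrest (hlam.removeHook hij) hn', ← pow_add,
      add_comm]

theorem IsHookRemovalSeq.neg_one_pow_sum (hq : 0 < q) (h : IsHookRemovalSeq q lam ls mu)
    (hlam : IsPartitionFun lam) (hn : lam n = 0) (hmu : IsQCore q mu) :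
    (-1 : ℤ) ^ ls.sum = (-1) ^ abacusInv q (betaSet lam n) := by
  obtain ⟨hmu', hle⟩ := h.isPartitionFun hlam
  have hmun : mu n = 0 := Nat.le_zero.1 (hn ▸ hle n)
  rw [← h.neg_one_pow_sum_mul hq hlam hn,
    abacusInv_eq_zero hq fun _ hx hxq => hmu.sub_mem_betaSet hq hmu' hmun hx hxq, pow_zero,
    mul_one]

end Sign

/-- For odd `q`, the `q`-sign `δ_q(lam) = (-1)^{L(c_1)+⋯+L(c_k)}` is
well defined (independent of the removal sequence of `q`-hooks from `lam` down to its
`q`-core), and `δ_q(lam) = δ_q(lam*)`. -/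
theorem stmt_7 (q : ℕ) (hq : Odd q) (lam : ℕ → ℕ) (hlam : IsPartitionFun lam) :
    (∀ ls1 mu1 ls2 mu2, IsHookRemovalSeq q lam ls1 mu1 → IsQCore q mu1 →
      IsHookRemovalSeq q lam ls2 mu2 → IsQCore q mu2 →
      ((-1 : ℤ) ^ ls1.sum = (-1 : ℤ) ^ ls2.sum)) ∧
    (∀ ls mu ls' mu', IsHookRemovalSeq q lam ls mu → IsQCore q mu →
      IsHookRemovalSeq q (conjFun lam) ls' mu' → IsQCore q mu' →
      ((-1 : ℤ) ^ ls.sum = (-1 : ℤ) ^ ls'.sum)) := by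
  have hq0 : 0 < q := hq.pos
  obtain ⟨N, hN⟩ := hlam.2
  have hn : lam N = 0 := hN N le_rfl
  have hn' : conjFun lam (lam 0) = 0 := Nat.le_zero.1 ((conjFun_le_iff hlam).2 le_rfl)
  refine ⟨fun ls1 mu1 ls2 mu2 h1 hmu1 h2 hmu2 => ?_, fun ls mu ls' mu' h hmu h' hmu' => ?_⟩
  · rw [h1.neg_one_pow_sum hq0 hlam hn hmu1, h2.neg_one_pow_sum hq0 hlam hn hmu2]
  · obtain ⟨ls'', h'', hsum⟩ := h.exists_conjFun hq hlam
    have hmuconj := hmu.conjFun (h.isPartitionFun hlam).1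
    rw [← hsum, h''.neg_one_pow_sum hq0 hlam.conjFun hn' hmuconj,
      h'.neg_one_pow_sum hq0 hlam.conjFun hn' hmu']
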